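/- arXiv:0912.3866 — 5 statements merged into one kernel-verified Lean document; each statement's English description precedes it below -/
import Mathlib

section
/- Let A be an associative unital k-algebra and f ∈ A^∨. Then the span of the right-shifted functionals {f_s : s ∈ A}, where f_s(x) = f(sx), is finite-dimensional if and only if the span of the left-shifted functionals {ₛf : s ∈ A}, where ₛf(x) = f(xs), is finite-dimensional. -/
set_option synthInstance.maxHeartbeats 1000000 in
lemma aux_flip_finite {k : Type*} [Field k] {A : Type*} [AddCommGroup A] [Module k A]
    (B : A →ₗ[k] Module.Dual k A) [FiniteDimensional k (LinearMap.range B)] :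
    FiniteDimensional k (LinearMap.range B.flip) := by
  set W := LinearMap.range B with hWdef

  let Θ : A →ₗ[k] Module.Dual k W := W.subtype.dualMap ∘ₗ Module.Dual.eval k A
  let L : Module.Dual k W →ₗ[k] Module.Dual k A := B.rangeRestrict.dualMap
  have hfac : B.flip = L ∘ₗ Θ := by
    ext x s; rfl
  have hle : LinearMap.range B.flip ≤ LinearMap.range L := by
    rw [hfac]; exact LinearMap.range_comp_le_range Θ L
  haveI : Module.Free k W := Module.Free.of_divisionRing k W
  have hW : FiniteDimensional k (Module.Dual k W) := (Module.finite_dual_iff k (V := W)).mpr inferInstance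
  have : FiniteDimensional k (LinearMap.range L) := Module.Finite.range L
  exact Submodule.finiteDimensional_of_le hle

/-- the span of the functionals `x ↦ f(sx)` (for `s ∈ A`) is
finite-dimensional iff the span of the functionals `x ↦ f(xs)` is finite-dimensional. -/
theorem finite_right_shifts_iff_finite_left_shifts (k : Type*) [Field k]
    (A : Type*) [Ring A] [Algebra k A] (f : Module.Dual k A) :
    FiniteDimensional k
        (Submodule.span k (Set.range fun s : A => f ∘ₗ LinearMap.mulLeft k s)) ↔
    FiniteDimensional k
        (Submodule.span k (Set.range fun s : A => f ∘ₗ LinearMap.mulRight k s)) := by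
  let B : A →ₗ[k] Module.Dual k A :=
    (LinearMap.llcomp k A A k f) ∘ₗ (LinearMap.mul k A)
  have hB : ∀ s : A, B s = f ∘ₗ LinearMap.mulLeft k s := fun s => rfl
  have hBf : ∀ s : A, B.flip s = f ∘ₗ LinearMap.mulRight k s := by
    intro s; ext x; rfl
  have h1 : Submodule.span k (Set.range fun s : A => f ∘ₗ LinearMap.mulLeft k s)
      = LinearMap.range B := by
    simp only [← hB]
    rw [← LinearMap.coe_range, Submodule.span_eq]
  have h2 : Submodule.span k (Set.range fun s : A => f ∘ₗ LinearMap.mulRight k s)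
      = LinearMap.range B.flip := by
    simp only [← hBf]
    rw [← LinearMap.coe_range, Submodule.span_eq]
  rw [h1, h2]
  constructor
  · intro h; exact aux_flip_finite B
  · intro h
    have : FiniteDimensional k (LinearMap.range B.flip.flip) := aux_flip_finite B.flip
    rwa [LinearMap.flip_flip] at this
end

section
/- Let A be an associative unital k-algebra and f ∈ A^∨. There exist functionals g₁,…,gₙ, h₁,…,hₙ ∈ A^∨ with f(xy) = Σᵢ gᵢ(x)hᵢ(y) for all x, y ∈ A if and only if there exist n ∈ ℕ, a row vector λ ∈ k^{1×n}, a column vector γ ∈ k^{n×1}, and a unital algebra morphism μ : A → Mₙ(k) such that f(s) = λ μ(s) γ for all s ∈ A. -/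
/-!
If `f (x * y) = ∑ i, g i x * h i y`, then `f` vanishes on the left ideal
`L = {a | f (A * a) = 0}`, which contains the common kernel of the `h i` and so has finite
codimension. `A` acts by left multiplication on the finite-dimensional space `A ⧸ L`, `f`
descends to it, and `f s` is the descended functional evaluated at `s • [1]`; in a basis of
`A ⧸ L` this reads `λ μ(s) γ`.
Conversely, `λ μ(x) μ(y) γ` splits as a sum over the middle index of the matrix product.
-/

open Matrix

theorem Module.Basis.dual_apply_eq_replicateRow_mul_toMatrix_mul_replicateCol
    {R M ι : Type*} [CommSemiring R] [AddCommMonoid M] [Module R M] [Fintype ι] [DecidableEq ι]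
    (b : Module.Basis ι R M) (φ : Module.Dual R M) (F : Module.End R M) (v : M) :
    φ (F v) = (replicateRow (Fin 1) (fun i => φ (b i)) * LinearMap.toMatrix b b F *
      replicateCol (Fin 1) (b.repr v)) 0 0 := by
  rw [Matrix.mul_assoc, ← replicateCol_mulVec, LinearMap.toMatrix_mulVec_repr,
    replicateRow_mul_replicateCol_apply]
  conv_lhs => rw [← b.sum_repr (F v)]
  simp only [map_sum, map_smul, smul_eq_mul, dotProduct, mul_comm]

theorem exists_matrix_repr_of_finiteDimensional {k : Type*} (A : Type*) {M : Type*}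
    [Field k] [Ring A] [Algebra k A] [AddCommGroup M] [Module k M] [Module A M]
    [IsScalarTower k A M] [FiniteDimensional k M] (φ : Module.Dual k M) (v : M) :
    ∃ (n : ℕ) (l : Matrix (Fin 1) (Fin n) k) (γ : Matrix (Fin n) (Fin 1) k)
      (μ : A →ₐ[k] Matrix (Fin n) (Fin n) k),
      ∀ s : A, φ (s • v) = (l * μ s * γ) 0 0 := by
  let b := Module.finBasis k M
  let ρ := Algebra.lsmul k k M (A := A)
  refine ⟨_, replicateRow (Fin 1) (fun i => φ (b i)), replicateCol (Fin 1) (b.repr v),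
    (LinearMap.toMatrixAlgEquiv b).toAlgHom.comp ρ, fun s => ?_⟩
  exact b.dual_apply_eq_replicateRow_mul_toMatrix_mul_replicateCol φ (ρ s) v

theorem exists_factorization_of_matrix_repr {R A ι : Type*} [CommSemiring R] [Semiring A]
    [Algebra R A] [Fintype ι] [DecidableEq ι] (l : Matrix (Fin 1) ι R)
    (γ : Matrix ι (Fin 1) R) (μ : A →ₐ[R] Matrix ι ι R) :
    ∃ g h : ι → Module.Dual R A,
      ∀ x y : A, (l * μ (x * y) * γ) 0 0 = ∑ i, g i x * h i y := by
  refine ⟨fun i =>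
      { toFun x := (l * μ x) 0 i
        map_add' x y := by simp [Matrix.mul_add]
        map_smul' c x := by simp [Matrix.mul_smul] },
    fun i =>
      { toFun y := (μ y * γ) i 0
        map_add' x y := by simp [Matrix.add_mul]
        map_smul' c y := by simp [Matrix.smul_mul] },
    fun x y => ?_⟩
  rw [map_mul, ← Matrix.mul_assoc, Matrix.mul_assoc _ (μ y), Matrix.mul_apply]
  rfl

namespace Module.Dual

section LeftKer

variable {R A : Type*} [CommSemiring R] [Semiring A] [Algebra R A]

/-- The largest left ideal of `A` on which `f` vanishes. -/
def leftKer (f : Module.Dual R A) : Submodule A A where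
  carrier := {a | ∀ x, f (x * a) = 0}
  add_mem' ha hb x := by simp [mul_add, ha x, hb x]
  zero_mem' x := by simp
  smul_mem' c a ha x := by simpa [mul_assoc] using ha (x * c)

theorem apply_eq_zero_of_mem_leftKer {f : Module.Dual R A} {a : A} (ha : a ∈ f.leftKer) :
    f a = 0 := by
  simpa using ha 1

end LeftKer

variable {k A : Type*} [Field k] [Ring A] [Algebra k A]

theorem cofg_leftKer_of_factorization {ι : Type*} [Fintype ι] {f : Module.Dual k A}
    (g h : ι → Module.Dual k A) (hf : ∀ x y, f (x * y) = ∑ i, g i x * h i y) :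
    (f.leftKer.restrictScalars k).CoFG := by
  refine (Submodule.CoFG.ker (LinearMap.pi h)).of_le fun y hker x => ?_
  have hy : ∀ i, h i y = 0 := fun i => congr_fun hker i
  simp [hf, hy]

theorem exists_matrix_repr_of_cofg_leftKer {f : Module.Dual k A}
    (hf : (f.leftKer.restrictScalars k).CoFG) :
    ∃ (n : ℕ) (l : Matrix (Fin 1) (Fin n) k) (γ : Matrix (Fin n) (Fin 1) k)
      (μ : A →ₐ[k] Matrix (Fin n) (Fin n) k), ∀ s : A, f s = (l * μ s * γ) 0 0 := by
  have : FiniteDimensional k (A ⧸ f.leftKer) :=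
    Module.Finite.equiv (Submodule.Quotient.restrictScalarsEquiv k f.leftKer)
  let f' : Module.Dual k (A ⧸ f.leftKer) :=
    (f.leftKer.restrictScalars k).liftQ f (fun _ => apply_eq_zero_of_mem_leftKer) ∘ₗ
      (Submodule.Quotient.restrictScalarsEquiv k f.leftKer).symm.toLinearMap
  obtain ⟨n, l, γ, μ, hμ⟩ :=
    exists_matrix_repr_of_finiteDimensional A f' (Submodule.Quotient.mk 1)
  refine ⟨n, l, γ, μ, fun s => ?_⟩
  rw [← hμ, ← Submodule.Quotient.mk_smul, smul_eq_mul, mul_one]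
  rfl

end Module.Dual

/-- `f(xy)` factors as a finite sum `Σᵢ gᵢ(x)hᵢ(y)` iff `f` is recognizable
by a finite-dimensional matrix representation: `f(s) = λ μ(s) γ`. -/
theorem factorization_iff_matrix_representation (k : Type*) [Field k]
    (A : Type*) [Ring A] [Algebra k A] (f : Module.Dual k A) :
    (∃ (n : ℕ) (g h : Fin n → Module.Dual k A),
        ∀ x y : A, f (x * y) = ∑ i, g i x * h i y) ↔
    (∃ (n : ℕ) (l : Matrix (Fin 1) (Fin n) k) (γ : Matrix (Fin n) (Fin 1) k)
        (μ : A →ₐ[k] Matrix (Fin n) (Fin n) k),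
        ∀ s : A, f s = (l * μ s * γ) 0 0) := by
  constructor
  · rintro ⟨n, g, h, hf⟩
    exact Module.Dual.exists_matrix_repr_of_cofg_leftKer
      (Module.Dual.cofg_leftKer_of_factorization g h hf)
  · rintro ⟨n, l, γ, μ, hμ⟩
    obtain ⟨g, h, hgh⟩ := exists_factorization_of_matrix_repr l γ μ
    exact ⟨n, g, h, fun x y => (hμ (x * y)).trans (hgh x y)⟩
end

section
/- Let A be a bialgebra over a field k and let A⁰ ⊆ A^∨ be the set of functionals f such that the family of left translates (ₛf)_{s∈A} spans a finite-dimensional space (the Sweedler dual). Then A⁰ is a linear subspace of A^∨ closed under the convolution product ∗_Δ (where (φ ∗_Δ ψ)(x) = (φ⊗ψ)(Δ(x))), and the counit ε belongs to A⁰; hence (A⁰, ∗_Δ, ε) is an associative unital algebra. -/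
open TensorProduct Coalgebra

/-- Membership in the Sweedler dual: the translates `x ↦ f(xs)` span a
finite-dimensional subspace of the dual. -/
def InSweedlerDual (k : Type*) [Field k] {A : Type*} [Ring A] [Algebra k A]
    (f : Module.Dual k A) : Prop :=
  FiniteDimensional k
    (Submodule.span k (Set.range fun s : A => f ∘ₗ LinearMap.mulRight k s))

/-- Convolution product on the dual of a coalgebra. -/
noncomputable def convProd {k : Type*} [Field k] {A : Type*} [Ring A] [Bialgebra k A]
    (φ ψ : Module.Dual k A) : Module.Dual k A :=
  (TensorProduct.lid k k).toLinearMap ∘ₗ (TensorProduct.map φ ψ) ∘ₗ comul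

/-
Translating a functional by `s` is linear in the functional, so `A⁰` is a subspace, and
`ε(xs) = ε(s) ε(x)` puts every translate of `ε` on the line `k ε`. Multiplicativity of `Δ` gives
`(f * g)(x s) = ∑ f(x₍₁₎ s₍₁₎) g(x₍₂₎ s₍₂₎)`, i.e. the translate of `f * g` by `s` is
`∑ (f translated by s₍₁₎) * (g translated by s₍₂₎)`; it therefore lies in the image of the
finite-dimensional spaces of translates of `f` and `g` under the bilinear convolution map.
Associativity and the unit laws hold because `convProd` is the product of Mathlib's convolution
algebra `WithConv (A →ₗ[k] k)`, whose unit is `ε`.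
-/

open Submodule WithConv

theorem TensorProduct.lid_self_eq_mul' (R : Type*) [CommSemiring R] :
    (TensorProduct.lid R R).toLinearMap = LinearMap.mul' R R :=
  TensorProduct.ext' fun _ _ => by simp

section

variable {k A : Type*} [Field k] [Ring A]

section Algebra

variable [Algebra k A]

theorem InSweedlerDual.of_comp_mulRight_mem {f : Module.Dual k A}
    {V : Submodule k (Module.Dual k A)} (hV : FiniteDimensional k V)
    (hf : ∀ s, f ∘ₗ LinearMap.mulRight k s ∈ V) : InSweedlerDual k f :=
  finiteDimensional_of_le (span_le.2 (Set.range_subset_iff.2 hf))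

theorem comp_mulRight_mem_span (f : Module.Dual k A) (s : A) :
    f ∘ₗ LinearMap.mulRight k s ∈ span k (Set.range fun t => f ∘ₗ LinearMap.mulRight k t) :=
  subset_span ⟨s, rfl⟩

theorem inSweedlerDual_zero : InSweedlerDual k (0 : Module.Dual k A) :=
  .of_comp_mulRight_mem (V := ⊥) inferInstance fun _ => by simp

theorem InSweedlerDual.add {f g : Module.Dual k A} (hf : InSweedlerDual k f)
    (hg : InSweedlerDual k g) : InSweedlerDual k (f + g) :=
  .of_comp_mulRight_mem (finiteDimensional_sup _ _ (h₁ := hf) (h₂ := hg)) fun s => by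
    rw [LinearMap.add_comp]
    exact add_mem_sup (comp_mulRight_mem_span f s) (comp_mulRight_mem_span g s)

theorem InSweedlerDual.smul (c : k) {f : Module.Dual k A} (hf : InSweedlerDual k f) :
    InSweedlerDual k (c • f) :=
  .of_comp_mulRight_mem hf fun s => by
    rw [LinearMap.smul_comp]
    exact smul_mem _ c (comp_mulRight_mem_span f s)

end Algebra

variable [Bialgebra k A]

theorem counit_comp_mulRight (s : A) :
    counit ∘ₗ LinearMap.mulRight k s = counit (R := k) s • counit := by
  ext x
  simp [Bialgebra.counit_mul, mul_comm]

theorem inSweedlerDual_counit : InSweedlerDual k (counit (R := k) (A := A)) :=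
  .of_comp_mulRight_mem (V := k ∙ counit) inferInstance fun s =>
    mem_span_singleton.2 ⟨counit s, (counit_comp_mulRight s).symm⟩

theorem convProd_eq_ofConv_mul (f g : Module.Dual k A) :
    convProd f g = (toConv f * toConv g).ofConv := by
  rw [convProd, LinearMap.convMul_def, lid_self_eq_mul']

theorem convProd_assoc (f g h : Module.Dual k A) :
    convProd (convProd f g) h = convProd f (convProd g h) := by
  simp only [convProd_eq_ofConv_mul, toConv_ofConv, mul_assoc]

theorem counit_eq_ofConv_one :
    counit (R := k) (A := A) = (1 : WithConv (Module.Dual k A)).ofConv :=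
  rfl

theorem counit_convProd (f : Module.Dual k A) : convProd counit f = f := by
  rw [counit_eq_ofConv_one, convProd_eq_ofConv_mul, toConv_ofConv, one_mul, ofConv_toConv]

theorem convProd_counit (f : Module.Dual k A) : convProd f counit = f := by
  rw [counit_eq_ofConv_one, convProd_eq_ofConv_mul, toConv_ofConv, mul_one, ofConv_toConv]

variable (k A) in
noncomputable def convProdBilin : Module.Dual k A →ₗ[k] Module.Dual k A →ₗ[k] Module.Dual k A :=
  let e := WithConv.linearEquiv k (Module.Dual k A)
  ((LinearMap.mul k _).compl₁₂ e.symm.toLinearMap e.symm.toLinearMap).compr₂ e.toLinearMap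

theorem convProdBilin_apply (f g : Module.Dual k A) : convProdBilin k A f g = convProd f g :=
  (convProd_eq_ofConv_mul f g).symm

theorem convProd_comp_mulRight (f g : Module.Dual k A) {s : A} {ι : Type*}
    (𝓡 : Coalgebra.Repr k s ι) :
    convProd f g ∘ₗ LinearMap.mulRight k s = ∑ i ∈ 𝓡.index,
      convProd (f ∘ₗ LinearMap.mulRight k (𝓡.left i)) (g ∘ₗ LinearMap.mulRight k (𝓡.right i)) := by
  ext x
  -- `(ℛ k x).mul 𝓡` represents `Δ (x * s)` because `Δ` is multiplicative.
  simp only [convProd_eq_ofConv_mul, LinearMap.coe_comp, Function.comp_apply,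
    LinearMap.mulRight_apply, ((ℛ k x).mul 𝓡).convMul_apply, Repr.mul_index, Repr.mul_left,
    Repr.mul_right, Finset.sum_product, LinearMap.coe_sum, Finset.sum_apply,
    (ℛ k x).convMul_apply]
  exact Finset.sum_comm

theorem InSweedlerDual.convProd {f g : Module.Dual k A} (hf : InSweedlerDual k f)
    (hg : InSweedlerDual k g) : InSweedlerDual k (convProd f g) :=
  .of_comp_mulRight_mem (Module.Finite.iff_fg.2 <|
      (Module.Finite.iff_fg.1 hf).map₂ (convProdBilin k A) (Module.Finite.iff_fg.1 hg))
    fun s => by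
      rw [convProd_comp_mulRight f g (ℛ k s)]
      refine sum_mem fun i _ => ?_
      rw [← convProdBilin_apply]
      exact apply_mem_map₂ _ (comp_mulRight_mem_span f _) (comp_mulRight_mem_span g _)

end

/-- the Sweedler dual `A⁰` is a linear subspace of `A^∨` closed under the
convolution product and containing the counit; with these operations it is an associative
unital algebra. -/
theorem sweedlerDual_subalgebra (k : Type*) [Field k] (A : Type*) [Ring A]
    [Bialgebra k A] :
    InSweedlerDual k (0 : Module.Dual k A) ∧
    (∀ f g : Module.Dual k A, InSweedlerDual k f → InSweedlerDual k g →
      InSweedlerDual k (f + g)) ∧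
    (∀ (c : k) (f : Module.Dual k A), InSweedlerDual k f → InSweedlerDual k (c • f)) ∧
    InSweedlerDual k (counit (R := k) (A := A)) ∧
    (∀ f g : Module.Dual k A, InSweedlerDual k f → InSweedlerDual k g →
      InSweedlerDual k (convProd f g)) ∧
    (∀ f g h : Module.Dual k A, convProd (convProd f g) h = convProd f (convProd g h)) ∧
    (∀ f : Module.Dual k A, convProd (counit (R := k)) f = f ∧
      convProd f (counit (R := k)) = f) :=
  ⟨inSweedlerDual_zero, fun _ _ => .add, fun c _ => .smul c, inSweedlerDual_counit,
    fun _ _ => .convProd, convProd_assoc, fun f => ⟨counit_convProd f, convProd_counit f⟩⟩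
end

section
/- Let A be a bialgebra over k and A⁰ its Sweedler dual (functionals with finite-dimensional orbit under translation). Then the transpose of the multiplication maps A⁰ into A⁰ ⊗ A⁰: for every f ∈ A⁰ there exist g₁,…,gₙ, h₁,…,hₙ ∈ A⁰ (not merely in A^∨) with f(xy) = Σᵢ gᵢ(x)hᵢ(y) for all x, y ∈ A. -/
/-!
The right translates of `f ∈ A⁰` span a finite-dimensional space `V` of functionals, stable
under right translation. Choosing a basis `gᵢ` of `V` together with points `xᵢ ∈ A` dual to it,
every `φ ∈ V` expands as `φ = Σᵢ φ(xᵢ) gᵢ`; applied to `φ = f(· y)` this gives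
`f(xy) = Σᵢ gᵢ(x) f(xᵢ y)`. The `gᵢ` lie in `A⁰` since their translates stay in `V`, and the
left translates `hᵢ = f(xᵢ ·)` lie in `A⁰` since their right translates are the images of
those of `f` under the transpose of left multiplication by `xᵢ`.
-/

open LinearMap Submodule

theorem Subspace.exists_sum_mul_apply_eq {K M : Type*} [Field K] [AddCommGroup M] [Module K M]
    (W : Subspace K (Module.Dual K M)) [FiniteDimensional K W] :
    ∃ (n : ℕ) (g : Fin n → Module.Dual K M) (x : Fin n → M), (∀ i, g i ∈ W) ∧
      ∀ φ ∈ W, ∀ m, φ m = ∑ i, g i m * φ (x i) := by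
  have := Module.Free.of_divisionRing K W
  let b := Module.finBasis K W
  -- `M ⧸ W.dualCoannihilator → Dual K W` is onto as `W` is finite-dimensional: dual points exist.
  have hx : ∀ i, ∃ x : M, ∀ φ : W, (φ : Module.Dual K M) x = b.repr φ i := fun i => by
    obtain ⟨q, hq⟩ := W.quotDualCoannihilatorToDual_bijective.2 (b.coord i)
    obtain ⟨x, rfl⟩ := Submodule.Quotient.mk_surjective _ q
    exact ⟨x, fun φ => LinearMap.congr_fun hq φ⟩
  choose x hx using hx
  refine ⟨_, fun i => b i, x, fun i => (b i).2, fun φ hφ m => ?_⟩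
  have hsum : φ = ∑ i, b.repr ⟨φ, hφ⟩ i • (b i : Module.Dual K M) := by
    have := congrArg Subtype.val (b.sum_repr ⟨φ, hφ⟩)
    push_cast at this
    exact this.symm
  conv_lhs => rw [hsum]
  have hcoord i : b.repr ⟨φ, hφ⟩ i = φ (x i) := (hx i _).symm
  simp only [hcoord, LinearMap.sum_apply, LinearMap.smul_apply, smul_eq_mul, mul_comm]

section SweedlerDual

variable {k A : Type*} [Field k] [Ring A] [Algebra k A]

def Module.Dual.rightTranslates (f : Module.Dual k A) : Submodule k (Module.Dual k A) :=
  span k (Set.range fun s : A => f ∘ₗ mulRight k s)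

theorem Module.Dual.mem_rightTranslates_self (f : Module.Dual k A) : f ∈ f.rightTranslates :=
  subset_span ⟨1, by ext; simp⟩

theorem Module.Dual.comp_mulRight_mem_rightTranslates {f φ : Module.Dual k A}
    (hφ : φ ∈ f.rightTranslates) (s : A) : φ ∘ₗ mulRight k s ∈ f.rightTranslates := by
  have hle : f.rightTranslates ≤ f.rightTranslates.comap (mulRight k s).dualMap := by
    refine span_le.2 ?_
    rintro _ ⟨t, rfl⟩
    exact subset_span ⟨s * t, by ext; simp [mul_assoc]⟩
  exact hle hφ

theorem InSweedlerDual.of_forall_comp_mulRight_mem {ψ : Module.Dual k A}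
    {W : Submodule k (Module.Dual k A)} [FiniteDimensional k W]
    (h : ∀ s : A, ψ ∘ₗ mulRight k s ∈ W) : InSweedlerDual k ψ :=
  Submodule.finiteDimensional_of_le (span_le.2 <| Set.range_subset_iff.2 h)

theorem InSweedlerDual.of_mem_rightTranslates {f φ : Module.Dual k A} (hf : InSweedlerDual k f)
    (hφ : φ ∈ f.rightTranslates) : InSweedlerDual k φ :=
  have : FiniteDimensional k f.rightTranslates := hf
  of_forall_comp_mulRight_mem (f.comp_mulRight_mem_rightTranslates hφ)

theorem InSweedlerDual.comp_mulLeft {f : Module.Dual k A} (hf : InSweedlerDual k f) (x : A) :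
    InSweedlerDual k (f ∘ₗ mulLeft k x) :=
  have : FiniteDimensional k f.rightTranslates := hf
  of_forall_comp_mulRight_mem (W := f.rightTranslates.map (mulLeft k x).dualMap) fun s =>
    ⟨f ∘ₗ mulRight k s, subset_span ⟨s, rfl⟩, by ext; simp [mul_assoc]⟩

end SweedlerDual

/-- the transpose of multiplication maps `A⁰` into `A⁰ ⊗ A⁰`: every
`f ∈ A⁰` factors as `f(xy) = Σᵢ gᵢ(x)hᵢ(y)` with all `gᵢ, hᵢ ∈ A⁰`. -/
theorem sweedlerDual_comul (k : Type*) [Field k] (A : Type*) [Ring A] [Bialgebra k A]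
    (f : Module.Dual k A) (hf : InSweedlerDual k f) :
    ∃ (n : ℕ) (g h : Fin n → Module.Dual k A),
      (∀ i, InSweedlerDual k (g i)) ∧ (∀ i, InSweedlerDual k (h i)) ∧
      ∀ x y : A, f (x * y) = ∑ i, g i x * h i y := by
  have : FiniteDimensional k f.rightTranslates := hf
  obtain ⟨n, g, a, hg, hexpand⟩ := Subspace.exists_sum_mul_apply_eq f.rightTranslates
  refine ⟨n, g, fun i => f ∘ₗ mulLeft k (a i), fun i => hf.of_mem_rightTranslates (hg i),
    fun i => hf.comp_mulLeft (a i), fun x y => ?_⟩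
  simpa using hexpand _ (f.comp_mulRight_mem_rightTranslates f.mem_rightTranslates_self y) x
end

section
/- Let Σ = G ⊔ L be a nonempty alphabet and let (k⟨Σ⟩, conc, 1, Δ_{G,L}, ε) be the bialgebra with Δ(x) = x⊗x for x ∈ G, Δ(x) = x⊗1 + 1⊗x for x ∈ L, ε(x) = 1 for x ∈ G, ε(x) = 0 for x ∈ L. Then this bialgebra admits an antipode if and only if G = ∅. -/
open TensorProduct

variable (k : Type*) [Field k] {X : Type*}

/-- The coproduct on the free algebra: `Δ(x) = x⊗x` for `x ∈ G`, `Δ(x) = x⊗1 + 1⊗x`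
for `x ∉ G`. -/
noncomputable def freeCoproduct (G : Set X) [DecidablePred (· ∈ G)] :
    FreeAlgebra k X →ₐ[k] FreeAlgebra k X ⊗[k] FreeAlgebra k X :=
  FreeAlgebra.lift k fun x =>
    if x ∈ G then FreeAlgebra.ι k x ⊗ₜ FreeAlgebra.ι k x
    else FreeAlgebra.ι k x ⊗ₜ 1 + 1 ⊗ₜ FreeAlgebra.ι k x

/-- The counit on the free algebra: `ε(x) = 1` for `x ∈ G`, `ε(x) = 0` for `x ∉ G`. -/
noncomputable def freeCounit (G : Set X) [DecidablePred (· ∈ G)] :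
    FreeAlgebra k X →ₐ[k] k :=
  FreeAlgebra.lift k fun x => if x ∈ G then (1 : k) else 0

/-!
If `x ∈ G`, then `Δ x = x ⊗ x` and `ε x = 1`, so an antipode `S` would give `S x * x = 1`;
sending every letter to the polynomial variable shows that no letter has a left inverse.
If `G = ∅`, every letter is primitive and the anti-automorphism `x ↦ -x` is an antipode:
for an anti-multiplicative `S` with `S 1 = 1`, the elements `a` with
`m (S ⊗ id) (Δ a) = ε a • 1` form a subalgebra, since `m (S ⊗ id) (u * t) = r • m (S ⊗ id) t`
whenever `m (S ⊗ id) u = r • 1`.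
-/

section Convolution

variable {R A : Type*} [CommSemiring R] [Semiring A] [Algebra R A]
  {S : A →ₗ[R] A}

theorem mul'_rTensor_mul_tmul (hS : ∀ a b, S (a * b) = S b * S a) (u : A ⊗[R] A) (a b : A) :
    LinearMap.mul' R A (S.rTensor A (u * a ⊗ₜ b)) =
      S a * LinearMap.mul' R A (S.rTensor A u) * b := by
  induction u using TensorProduct.induction_on with
  | zero => simp
  | tmul c d => simp [hS, mul_assoc]
  | add u v hu hv => simp [add_mul, hu, hv, mul_add]

theorem mul'_lTensor_tmul_mul (hS : ∀ a b, S (a * b) = S b * S a) (u : A ⊗[R] A) (a b : A) :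
    LinearMap.mul' R A (S.lTensor A (a ⊗ₜ b * u)) =
      a * LinearMap.mul' R A (S.lTensor A u) * S b := by
  induction u using TensorProduct.induction_on with
  | zero => simp
  | tmul c d => simp [hS, mul_assoc]
  | add u v hu hv => simp [mul_add, hu, hv, add_mul]

theorem mul'_rTensor_mul_of_eq_algebraMap (hS : ∀ a b, S (a * b) = S b * S a)
    {u : A ⊗[R] A} {r : R} (hu : LinearMap.mul' R A (S.rTensor A u) = algebraMap R A r)
    (t : A ⊗[R] A) :
    LinearMap.mul' R A (S.rTensor A (u * t)) = r • LinearMap.mul' R A (S.rTensor A t) := by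
  induction t using TensorProduct.induction_on with
  | zero => simp
  | tmul a b => simp [mul'_rTensor_mul_tmul hS, hu, Algebra.commutes, mul_assoc, Algebra.smul_def]
  | add t t' ht ht' => simp [mul_add, ht, ht']

theorem mul'_lTensor_mul_of_eq_algebraMap (hS : ∀ a b, S (a * b) = S b * S a)
    {u : A ⊗[R] A} {r : R} (hu : LinearMap.mul' R A (S.lTensor A u) = algebraMap R A r)
    (t : A ⊗[R] A) :
    LinearMap.mul' R A (S.lTensor A (t * u)) = r • LinearMap.mul' R A (S.lTensor A t) := by
  induction t using TensorProduct.induction_on with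
  | zero => simp
  | tmul a b => simp [mul'_lTensor_tmul_mul hS, hu, Algebra.commutes, mul_assoc, Algebra.smul_def]
  | add t t' ht ht' => simp [add_mul, ht, ht']

variable (Δ : A →ₐ[R] A ⊗[R] A) (ε : A →ₐ[R] R) {s : Set A}

theorem mul_rTensor_comul_eq_of_adjoin_eq_top (hS1 : S 1 = 1)
    (hS : ∀ a b, S (a * b) = S b * S a) (hs : Algebra.adjoin R s = ⊤)
    (hgen : ∀ x ∈ s, LinearMap.mul' R A (S.rTensor A (Δ x)) = algebraMap R A (ε x)) :
    LinearMap.mul' R A ∘ₗ S.rTensor A ∘ₗ Δ.toLinearMap =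
      Algebra.linearMap R A ∘ₗ ε.toLinearMap := by
  ext a
  induction (hs ▸ Algebra.mem_top : a ∈ Algebra.adjoin R s) using Algebra.adjoin_induction with
  | mem x hx => exact hgen x hx
  | algebraMap r => simp [Algebra.algebraMap_eq_smul_one, Algebra.TensorProduct.one_def, hS1]
  | add x y _ _ hx hy => simp_all
  | mul x y _ _ hx hy =>
    simp only [LinearMap.comp_apply, AlgHom.toLinearMap_apply, map_mul] at hx hy ⊢
    rw [mul'_rTensor_mul_of_eq_algebraMap hS hx, hy]
    simp [Algebra.smul_def]

theorem mul_lTensor_comul_eq_of_adjoin_eq_top (hS1 : S 1 = 1)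
    (hS : ∀ a b, S (a * b) = S b * S a) (hs : Algebra.adjoin R s = ⊤)
    (hgen : ∀ x ∈ s, LinearMap.mul' R A (S.lTensor A (Δ x)) = algebraMap R A (ε x)) :
    LinearMap.mul' R A ∘ₗ S.lTensor A ∘ₗ Δ.toLinearMap =
      Algebra.linearMap R A ∘ₗ ε.toLinearMap := by
  ext a
  induction (hs ▸ Algebra.mem_top : a ∈ Algebra.adjoin R s) using Algebra.adjoin_induction with
  | mem x hx => exact hgen x hx
  | algebraMap r => simp [Algebra.algebraMap_eq_smul_one, Algebra.TensorProduct.one_def, hS1]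
  | add x y _ _ hx hy => simp_all
  | mul x y _ _ hx hy =>
    simp only [LinearMap.comp_apply, AlgHom.toLinearMap_apply, map_mul] at hx hy ⊢
    rw [mul'_lTensor_mul_of_eq_algebraMap hS hy, hx]
    simp [Algebra.smul_def, ← map_mul, mul_comm]

end Convolution

namespace FreeAlgebra

variable {R : Type*} [CommRing R] {X : Type*}

noncomputable def negReverse : FreeAlgebra R X →ₗ[R] FreeAlgebra R X :=
  (MulOpposite.opLinearEquiv R).symm.toLinearMap ∘ₗ
    (lift R fun x => MulOpposite.op (-ι R x)).toLinearMap

@[simp]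
theorem negReverse_one : negReverse (1 : FreeAlgebra R X) = 1 := by
  simp [negReverse]

@[simp]
theorem negReverse_ι (x : X) : negReverse (ι R x) = -ι R x := by
  simp [negReverse]

theorem negReverse_mul (a b : FreeAlgebra R X) :
    negReverse (a * b) = negReverse b * negReverse a := by
  simp [negReverse]

theorem mul_ι_ne_one [Nontrivial R] (a : FreeAlgebra R X) (x : X) : a * ι R x ≠ 1 := by
  intro h
  have := congrArg (lift R fun _ : X => (Polynomial.X : Polynomial R)) h
  rw [map_mul, lift_ι_apply, map_one] at this
  exact Polynomial.not_isUnit_X (IsUnit.of_mul_eq_one_right _ this)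

end FreeAlgebra

open FreeAlgebra in
theorem freeBialgebra_antipode_iff (G : Set X) [DecidablePred (· ∈ G)] :
    (∃ S : FreeAlgebra k X →ₗ[k] FreeAlgebra k X,
      LinearMap.mul' k (FreeAlgebra k X) ∘ₗ S.rTensor (FreeAlgebra k X) ∘ₗ
          (freeCoproduct k G).toLinearMap =
        Algebra.linearMap k (FreeAlgebra k X) ∘ₗ (freeCounit k G).toLinearMap ∧
      LinearMap.mul' k (FreeAlgebra k X) ∘ₗ S.lTensor (FreeAlgebra k X) ∘ₗ
          (freeCoproduct k G).toLinearMap =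
        Algebra.linearMap k (FreeAlgebra k X) ∘ₗ (freeCounit k G).toLinearMap) ↔
    G = ∅ := by
  constructor
  · rintro ⟨S, hS, -⟩
    refine Set.eq_empty_of_forall_notMem fun x hx => mul_ι_ne_one (S (ι k x)) x ?_
    simpa [freeCoproduct, freeCounit, hx] using LinearMap.congr_fun hS (ι k x)
  · rintro rfl
    refine ⟨negReverse,
      mul_rTensor_comul_eq_of_adjoin_eq_top _ _ negReverse_one negReverse_mul
        (adjoin_range_ι k X) ?_,
      mul_lTensor_comul_eq_of_adjoin_eq_top _ _ negReverse_one negReverse_mul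
        (adjoin_range_ι k X) ?_⟩ <;>
    · rintro _ ⟨x, rfl⟩
      simp [freeCoproduct, freeCounit]
end
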